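/- arXiv:1612.02861 — 3 statements merged into one kernel-verified Lean document; each statement's English description precedes it below -/
import Mathlib

section
/- Let V ⊂ F^{n+1} be a linear subspace with 1 ≤ dim V ≤ n, let p_V be orthogonal projection onto V, and let [w] ∈ FP^n with w ∉ V^⊥. Then for every nonzero u ∈ V, d_g([w],[p_V(w)]) ≤ d_g([w],[u]), i.e., [p_V(w)] is a closest point to [w] in the projectivization of V with respect to the Fubini–Study geodesic distance d_g([x],[y]) = arccos(|⟨x,y⟩|/(‖x‖‖y‖)). -/
/-!
Since `w - p_V w ⟂ V`, every `u ∈ V` has `⟪w, u⟫ = ⟪p_V w, u⟫`, so by Cauchy–Schwarz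
`|⟪w, u⟫| / (‖w‖ ‖u‖) ≤ ‖p_V w‖ / ‖w‖`, and `u = p_V w` attains this bound because
`⟪w, p_V w⟫ = ‖p_V w‖²`. As `arccos` is antitone, `p_V w` minimises `d_g([w], ·)` on `V`.
-/

open scoped InnerProductSpace

namespace Submodule

variable {𝕜 E : Type*} [RCLike 𝕜] [NormedAddCommGroup E] [InnerProductSpace 𝕜 E]
  (K : Submodule 𝕜 E) [K.HasOrthogonalProjection]

theorem inner_orthogonalProjectionOnto_right_eq_norm_sq (w : E) :
    ⟪w, (K.orthogonalProjectionOnto w : E)⟫_𝕜 = ‖(K.orthogonalProjectionOnto w : E)‖ ^ 2 := by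
  rw [← inner_self_eq_norm_sq_to_K, ← coe_inner, inner_orthogonalProjectionOnto_eq_of_mem_right]

theorem norm_inner_orthogonalProjectionOnto_div (w : E) :
    ‖⟪w, (K.orthogonalProjectionOnto w : E)⟫_𝕜‖ / (‖w‖ * ‖(K.orthogonalProjectionOnto w : E)‖) =
      ‖(K.orthogonalProjectionOnto w : E)‖ / ‖w‖ := by
  rw [inner_orthogonalProjectionOnto_right_eq_norm_sq, norm_pow, RCLike.norm_ofReal, abs_norm, sq]
  rcases eq_or_ne ‖(K.orthogonalProjectionOnto w : E)‖ 0 with h0 | hne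
  · rw [h0]; simp
  · rw [mul_comm ‖w‖, mul_div_mul_left _ _ hne]

theorem norm_inner_div_le_of_mem {u : E} (hu : u ∈ K) (w : E) :
    ‖⟪w, u⟫_𝕜‖ / (‖w‖ * ‖u‖) ≤ ‖(K.orthogonalProjectionOnto w : E)‖ / ‖w‖ := by
  rcases eq_or_ne ‖u‖ 0 with h0 | hne
  · rw [h0, mul_zero, div_zero]; positivity
  calc ‖⟪w, u⟫_𝕜‖ / (‖w‖ * ‖u‖)
      = ‖⟪(K.orthogonalProjectionOnto w : E), u⟫_𝕜‖ / (‖w‖ * ‖u‖) := by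
        rw [show u = ((⟨u, hu⟩ : K) : E) from rfl, ← coe_inner,
          inner_orthogonalProjectionOnto_eq_of_mem_right]
    _ ≤ ‖(K.orthogonalProjectionOnto w : E)‖ * ‖u‖ / (‖w‖ * ‖u‖) := by
        gcongr; exact norm_inner_le_norm _ _
    _ = ‖(K.orthogonalProjectionOnto w : E)‖ / ‖w‖ := mul_div_mul_right _ _ hne

end Submodule

theorem stmt_1_general {𝕜 : Type} [RCLike 𝕜] {n : ℕ}
    (V : Submodule 𝕜 (EuclideanSpace 𝕜 (Fin (n + 1))))
    (dg : EuclideanSpace 𝕜 (Fin (n + 1)) → EuclideanSpace 𝕜 (Fin (n + 1)) → ℝ)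
    (hdg : ∀ x y, dg x y = Real.arccos (‖⟪x, y⟫_𝕜‖ / (‖x‖ * ‖y‖)))
    (w : EuclideanSpace 𝕜 (Fin (n + 1)))
    (u : EuclideanSpace 𝕜 (Fin (n + 1))) (hu : u ∈ V) :
    dg w ((Submodule.orthogonalProjectionOnto V w : EuclideanSpace 𝕜 (Fin (n + 1)))) ≤ dg w u := by
  rw [hdg, hdg, V.norm_inner_orthogonalProjectionOnto_div]
  exact Real.arccos_le_arccos (V.norm_inner_div_le_of_mem hu w)

/-- If `V ⊆ F^{n+1}` is a subspace with `1 ≤ dim V ≤ n`, `p_V` is the orthogonal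
projection onto `V`, and `w ∉ V^⊥`, then `[p_V(w)]` is a closest point to `[w]`
in the projectivization of `V` with respect to the Fubini–Study geodesic distance
`d_g([x],[y]) = arccos(|⟨x,y⟩| / (‖x‖‖y‖))`. -/
theorem stmt_1 {𝕜 : Type} [RCLike 𝕜] {n : ℕ}
    (V : Submodule 𝕜 (EuclideanSpace 𝕜 (Fin (n + 1))))
    (hV1 : 1 ≤ Module.finrank 𝕜 V) (hV2 : Module.finrank 𝕜 V ≤ n)
    (dg : EuclideanSpace 𝕜 (Fin (n + 1)) → EuclideanSpace 𝕜 (Fin (n + 1)) → ℝ)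
    (hdg : ∀ x y, dg x y = Real.arccos (‖⟪x, y⟫_𝕜‖ / (‖x‖ * ‖y‖)))
    (w : EuclideanSpace 𝕜 (Fin (n + 1))) (hw : w ∉ Vᗮ)
    (u : EuclideanSpace 𝕜 (Fin (n + 1))) (hu : u ∈ V) (hu0 : u ≠ 0) :
    dg w ((Submodule.orthogonalProjectionOnto V w : EuclideanSpace 𝕜 (Fin (n + 1)))) ≤ dg w u :=
  stmt_1_general V dg hdg w u hu
end

section
/- Let V ⊂ F^{n+1} be a subspace with 1 ≤ dim V ≤ n. The map h([w],t) = [(1−t)·w + t·p_V(w)] is a well-defined homotopy on FP^n ∖ P(V^⊥) from the identity to the composition of the projection P_V([w]) = [p_V(w)] with the inclusion of P(V); hence P(V) is a deformation retract of FP^n ∖ P(V^⊥). -/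
open scoped InnerProductSpace unitInterval

/-- The projective equivalence relation on nonzero vectors: `u ∼ v` iff `u = a • v`
for some scalar `a` (necessarily nonzero). -/
def projSetoid (𝕜 : Type) [Field 𝕜] (E : Type) [AddCommGroup E] [Module 𝕜 E] :
    Setoid {v : E // v ≠ 0} where
  r u v := ∃ a : 𝕜, (u : E) = a • (v : E)
  iseqv := by
    constructor
    · exact fun u => ⟨1, (one_smul 𝕜 (u : E)).symm⟩
    · rintro u v ⟨a, h⟩
      have ha : a ≠ 0 := by
        rintro rfl
        exact u.2 (by simpa using h)
      exact ⟨a⁻¹, by rw [h, smul_smul, inv_mul_cancel₀ ha, one_smul]⟩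
    · rintro u v w ⟨a, h1⟩ ⟨b, h2⟩
      exact ⟨a * b, by rw [h1, h2, smul_smul]⟩

/-- Projective space `FP^n` as the quotient of `F^{n+1} ∖ {0}` by scalar
multiplication, with the quotient topology. -/
def ProjSp (𝕜 : Type) [Field 𝕜] (E : Type) [AddCommGroup E] [Module 𝕜 E] : Type :=
  Quotient (projSetoid 𝕜 E)

instance {𝕜 : Type} [Field 𝕜] {E : Type} [AddCommGroup E] [Module 𝕜 E]
    [TopologicalSpace E] : TopologicalSpace (ProjSp 𝕜 E) :=
  instTopologicalSpaceQuotient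

/-- The projectivization `P(V)` of a subspace `V`, as a subset of projective space. -/
def projSubset (𝕜 : Type) [Field 𝕜] {E : Type} [AddCommGroup E] [Module 𝕜 E]
    (V : Submodule 𝕜 E) : Set (ProjSp 𝕜 E) :=
  {x | ∃ (w : E) (hw : w ≠ 0), w ∈ V ∧ x = Quotient.mk (projSetoid 𝕜 E) ⟨w, hw⟩}

/-!
Since `p_V` is idempotent, `p_V ((1 - t) • w + t • p_V w) = p_V w` for every `t`. Hence, when
`w ∉ Vᗮ = ker p_V`, the segment from `w` to `p_V w` avoids `Vᗮ`, in particular `0`. The segment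
is homogeneous in `w`, so it descends to `FP^n ∖ P(Vᗮ)`; it is continuous there because the
quotient map to projective space is open, so that its product with `id : I → I` is again a
quotient map.
-/

section ProjSp

variable {𝕜 : Type} [Field 𝕜] {E : Type} [AddCommGroup E] [Module 𝕜 E]

lemma mk_mem_projSubset_iff (U : Submodule 𝕜 E) (w : E) (hw : w ≠ 0) :
    Quotient.mk (projSetoid 𝕜 E) ⟨w, hw⟩ ∈ projSubset 𝕜 U ↔ w ∈ U := by
  refine ⟨?_, fun h => ⟨w, hw, h, rfl⟩⟩
  rintro ⟨u, _, hu, hwu⟩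
  obtain ⟨a, ha⟩ := Quotient.exact hwu
  exact (show w = a • u from ha) ▸ U.smul_mem a hu

noncomputable def ProjSp.out (x : ProjSp 𝕜 E) : {v : E // v ≠ 0} :=
  Quotient.out x

lemma ProjSp.mk_out (x : ProjSp 𝕜 E) : Quotient.mk (projSetoid 𝕜 E) x.out = x :=
  Quotient.out_eq x

lemma mem_projSubset_iff_out_mem (U : Submodule 𝕜 E) (x : ProjSp 𝕜 E) :
    x ∈ projSubset 𝕜 U ↔ (x.out : E) ∈ U := by
  rw [← mk_mem_projSubset_iff U _ x.out.2]
  exact Iff.of_eq (congrArg (· ∈ projSubset 𝕜 U) x.mk_out.symm)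

lemma mk_eq_mk_of_homogeneous {f : E → E} (hf : ∀ (a : 𝕜) v, f (a • v) = a • f v)
    {u v : {v : E // v ≠ 0}} (huv : Quotient.mk (projSetoid 𝕜 E) u = Quotient.mk _ v)
    (hu : f u ≠ 0) (hv : f v ≠ 0) :
    Quotient.mk (projSetoid 𝕜 E) ⟨f u, hu⟩ = Quotient.mk _ ⟨f v, hv⟩ := by
  obtain ⟨a, ha⟩ := Quotient.exact huv
  exact Quotient.sound ⟨a, by simp only [ha, hf]⟩

variable [TopologicalSpace E] [ContinuousConstSMul 𝕜 E]

lemma isOpenMap_mk_projSetoid : IsOpenMap (Quotient.mk (projSetoid 𝕜 E)) := by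
  intro U hU
  rw [isOpen_coinduced (f := Quotient.mk (projSetoid 𝕜 E))]
  have saturation : Quotient.mk (projSetoid 𝕜 E) ⁻¹' (Quotient.mk _ '' U) =
      ⋃ a : 𝕜ˣ, (fun v : {v : E // v ≠ 0} =>
        (⟨(a : 𝕜) • v.1, smul_ne_zero a.ne_zero v.2⟩ : {v : E // v ≠ 0})) ⁻¹' U := by
    ext v
    simp only [Set.mem_preimage, Set.mem_image, Set.mem_iUnion]
    constructor
    · rintro ⟨u, hu, huv⟩
      obtain ⟨a, ha⟩ := Quotient.exact huv
      have ha0 : a ≠ 0 := by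
        rintro rfl
        exact u.2 (by simpa using ha)
      exact ⟨Units.mk0 a ha0, Set.mem_of_eq_of_mem (Subtype.ext ha.symm) hu⟩
    · rintro ⟨a, ha⟩
      exact ⟨_, ha, Quotient.sound ⟨(a : 𝕜), rfl⟩⟩
  rw [saturation]
  exact isOpen_iUnion fun a =>
    hU.preimage (((continuous_const_smul (a : 𝕜)).comp continuous_subtype_val).subtype_mk _)

lemma isQuotientMap_prodMap_restrictPreimage_mk (S : Set (ProjSp 𝕜 E)) (Y : Type*)
    [TopologicalSpace Y] :
    Topology.IsQuotientMap
      (Prod.map (S.restrictPreimage (Quotient.mk (projSetoid 𝕜 E))) (id : Y → Y)) :=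
  IsOpenMap.isQuotientMap
    ((isOpenMap_mk_projSetoid.restrictPreimage S).prodMap IsOpenMap.id)
    (continuous_quotient_mk'.restrictPreimage.prodMap continuous_id)
    ((S.restrictPreimage_surjective Quotient.mk_surjective).prodMap Function.surjective_id)

end ProjSp

namespace Submodule

variable {𝕜 E : Type*} [RCLike 𝕜] [NormedAddCommGroup E] [InnerProductSpace 𝕜 E]
  [NormedSpace ℝ E] (V : Submodule 𝕜 E) [V.HasOrthogonalProjection]

noncomputable def segmentToProjection (w : E) (t : ℝ) : E :=
  (1 - t) • w + t • (V.orthogonalProjectionOnto w : E)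

lemma segmentToProjection_zero (w : E) : V.segmentToProjection w 0 = w := by
  simp [segmentToProjection]

lemma segmentToProjection_one_mem (w : E) : V.segmentToProjection w 1 ∈ V := by
  simp [segmentToProjection]

lemma segmentToProjection_of_mem {w : E} (hw : w ∈ V) (t : ℝ) :
    V.segmentToProjection w t = w := by
  simp [segmentToProjection, starProjection_eq_self_iff.2 hw, ← add_smul]

lemma continuous_segmentToProjection :
    Continuous fun p : E × ℝ => V.segmentToProjection p.1 p.2 := by
  unfold segmentToProjection
  fun_prop

variable [IsScalarTower ℝ 𝕜 E]

lemma orthogonalProjectionOnto_segmentToProjection (w : E) (t : ℝ) :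
    V.orthogonalProjectionOnto (V.segmentToProjection w t) = V.orthogonalProjectionOnto w := by
  simp [segmentToProjection, orthogonalProjectionOnto_starProjection_of_le le_rfl, ← add_smul]

lemma segmentToProjection_mem_orthogonal_iff (w : E) (t : ℝ) :
    V.segmentToProjection w t ∈ Vᗮ ↔ w ∈ Vᗮ := by
  rw [← orthogonalProjectionOnto_eq_zero_iff, orthogonalProjectionOnto_segmentToProjection,
    orthogonalProjectionOnto_eq_zero_iff]

lemma mem_orthogonal_of_segmentToProjection_eq_zero {w : E} {t : ℝ}
    (h : V.segmentToProjection w t = 0) : w ∈ Vᗮ :=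
  (V.segmentToProjection_mem_orthogonal_iff w t).1 (h ▸ Vᗮ.zero_mem)

lemma segmentToProjection_ne_zero {w : E} (hw : w ∉ Vᗮ) (t : ℝ) :
    V.segmentToProjection w t ≠ 0 :=
  fun h => hw (V.mem_orthogonal_of_segmentToProjection_eq_zero h)

lemma segmentToProjection_smul (a : 𝕜) (w : E) (t : ℝ) :
    V.segmentToProjection (a • w) t = a • V.segmentToProjection w t := by
  simp only [segmentToProjection, map_smul, coe_smul, smul_add, smul_comm a]

end Submodule

section Homotopy

variable {𝕜 E : Type} [RCLike 𝕜] [NormedAddCommGroup E] [InnerProductSpace 𝕜 E]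
  [NormedSpace ℝ E] [IsScalarTower ℝ 𝕜 E] (V : Submodule 𝕜 E) [V.HasOrthogonalProjection]

noncomputable def projSegmentPoint (w : E) (hw : w ∉ Vᗮ) (t : ℝ) :
    {x : ProjSp 𝕜 E // x ∉ projSubset 𝕜 Vᗮ} :=
  ⟨Quotient.mk _ ⟨V.segmentToProjection w t, V.segmentToProjection_ne_zero hw t⟩,
    fun h => hw <| (V.segmentToProjection_mem_orthogonal_iff w t).1 <|
      (mk_mem_projSubset_iff _ _ _).1 h⟩

noncomputable def projHomotopy (z : {x : ProjSp 𝕜 E // x ∉ projSubset 𝕜 Vᗮ} × I) :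
    {x : ProjSp 𝕜 E // x ∉ projSubset 𝕜 Vᗮ} :=
  projSegmentPoint V z.1.1.out ((mem_projSubset_iff_out_mem _ _).not.1 z.1.2) z.2

lemma projHomotopy_mk (w : E) (hw : w ≠ 0)
    (hx : Quotient.mk (projSetoid 𝕜 E) ⟨w, hw⟩ ∉ projSubset 𝕜 Vᗮ) (t : I) :
    projHomotopy V (⟨Quotient.mk _ ⟨w, hw⟩, hx⟩, t) =
      projSegmentPoint V w ((mk_mem_projSubset_iff _ _ _).not.1 hx) t :=
  Subtype.ext <| mk_eq_mk_of_homogeneous (f := (V.segmentToProjection · t))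
    (fun a v => V.segmentToProjection_smul a v t) (ProjSp.mk_out _) _ _

lemma continuous_projHomotopy : Continuous (projHomotopy V) := by
  rw [(isQuotientMap_prodMap_restrictPreimage_mk (projSubset 𝕜 Vᗮ)ᶜ I).continuous_iff]
  have lift : projHomotopy V ∘ Prod.map ((projSubset 𝕜 Vᗮ)ᶜ.restrictPreimage
      (Quotient.mk (projSetoid 𝕜 E))) id =
      fun z => projSegmentPoint V z.1.1.1 ((mk_mem_projSubset_iff _ _ _).not.1 z.1.2) z.2 :=
    funext fun z => projHomotopy_mk V z.1.1.1 z.1.1.2 z.1.2 z.2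
  rw [lift]
  refine Continuous.subtype_mk (continuous_quotient_mk'.comp (Continuous.subtype_mk ?_ _)) _
  exact V.continuous_segmentToProjection.comp
    ((continuous_subtype_val.comp (continuous_subtype_val.comp continuous_fst)).prodMk
      (continuous_subtype_val.comp continuous_snd))

lemma projHomotopy_eq_self {x : {x : ProjSp 𝕜 E // x ∉ projSubset 𝕜 Vᗮ}} {t : I}
    (h : V.segmentToProjection x.1.out t = x.1.out) :
    projHomotopy V (x, t) = x :=
  Subtype.ext <| (congrArg (Quotient.mk _) (Subtype.ext h)).trans x.1.mk_out

lemma projHomotopy_zero (x : {x : ProjSp 𝕜 E // x ∉ projSubset 𝕜 Vᗮ}) :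
    projHomotopy V (x, 0) = x :=
  projHomotopy_eq_self V (V.segmentToProjection_zero _)

lemma projHomotopy_one_mem (x : {x : ProjSp 𝕜 E // x ∉ projSubset 𝕜 Vᗮ}) :
    (projHomotopy V (x, 1)).1 ∈ projSubset 𝕜 V :=
  (mk_mem_projSubset_iff _ _ _).2 (V.segmentToProjection_one_mem _)

lemma projHomotopy_of_mem {x : {x : ProjSp 𝕜 E // x ∉ projSubset 𝕜 Vᗮ}}
    (hx : x.1 ∈ projSubset 𝕜 V) (t : I) : projHomotopy V (x, t) = x :=
  projHomotopy_eq_self V <|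
    V.segmentToProjection_of_mem ((mem_projSubset_iff_out_mem V _).1 hx) t

end Homotopy

theorem stmt_2_general {𝕜 : Type} [RCLike 𝕜] {n : ℕ}
    (V : Submodule 𝕜 (EuclideanSpace 𝕜 (Fin (n + 1)))) :
    (∀ (w : EuclideanSpace 𝕜 (Fin (n + 1))) (t : ℝ), t ∈ Set.Icc (0 : ℝ) 1 →
      (1 - t) • w + t • (V.orthogonalProjectionOnto w : EuclideanSpace 𝕜 (Fin (n + 1))) = 0 →
        w ∈ Vᗮ) ∧
    ∃ H : C(({x : ProjSp 𝕜 (EuclideanSpace 𝕜 (Fin (n + 1))) // x ∉ projSubset 𝕜 Vᗮ} × I),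
          {x : ProjSp 𝕜 (EuclideanSpace 𝕜 (Fin (n + 1))) // x ∉ projSubset 𝕜 Vᗮ}),
      (∀ x, H (x, 0) = x) ∧
      (∀ x, (H (x, 1)).1 ∈ projSubset 𝕜 V) ∧
      (∀ x t, x.1 ∈ projSubset 𝕜 V → H (x, t) = x) ∧
      ∀ (w : EuclideanSpace 𝕜 (Fin (n + 1))) (hw : w ≠ 0)
        (hmem : Quotient.mk (projSetoid 𝕜 _) ⟨w, hw⟩ ∉ projSubset 𝕜 Vᗮ) (t : I),
        ∃ hz : (1 - (t : ℝ)) • w +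
            (t : ℝ) • (V.orthogonalProjectionOnto w : EuclideanSpace 𝕜 (Fin (n + 1))) ≠ 0,
          (H (⟨Quotient.mk (projSetoid 𝕜 _) ⟨w, hw⟩, hmem⟩, t)).1 =
            Quotient.mk (projSetoid 𝕜 _)
              ⟨(1 - (t : ℝ)) • w +
                (t : ℝ) • (V.orthogonalProjectionOnto w : EuclideanSpace 𝕜 (Fin (n + 1))), hz⟩ := by
  refine ⟨fun w t _ h => V.mem_orthogonal_of_segmentToProjection_eq_zero h,
    ⟨projHomotopy V, continuous_projHomotopy V⟩, projHomotopy_zero V, projHomotopy_one_mem V,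
    fun x t hx => projHomotopy_of_mem V hx t, fun w hw hmem t => ?_⟩
  refine ⟨V.segmentToProjection_ne_zero ((mk_mem_projSubset_iff _ _ _).not.1 hmem) t, ?_⟩
  exact congrArg Subtype.val (projHomotopy_mk V w hw hmem t)

/-- Let `V ⊆ F^{n+1}` with `1 ≤ dim V ≤ n`.  The map `h([w],t) = [(1−t)w + t·p_V(w)]`
is a well-defined homotopy on `FP^n ∖ P(V^⊥)` from the identity to the projection
`P_V([w]) = [p_V(w)]` into `P(V)` (in particular `(1−t)w + t·p_V(w) = 0` forces
`w ∈ V^⊥`); it fixes `P(V)` pointwise, so `P(V)` is a deformation retract of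
`FP^n ∖ P(V^⊥)`. -/
theorem stmt_2 {𝕜 : Type} [RCLike 𝕜] {n : ℕ}
    (V : Submodule 𝕜 (EuclideanSpace 𝕜 (Fin (n + 1))))
    (hV1 : 1 ≤ Module.finrank 𝕜 V) (hV2 : Module.finrank 𝕜 V ≤ n) :
    (∀ (w : EuclideanSpace 𝕜 (Fin (n + 1))) (t : ℝ), t ∈ Set.Icc (0 : ℝ) 1 →
      (1 - t) • w + t • (V.orthogonalProjectionOnto w : EuclideanSpace 𝕜 (Fin (n + 1))) = 0 →
        w ∈ Vᗮ) ∧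
    ∃ H : C(({x : ProjSp 𝕜 (EuclideanSpace 𝕜 (Fin (n + 1))) // x ∉ projSubset 𝕜 Vᗮ} × I),
          {x : ProjSp 𝕜 (EuclideanSpace 𝕜 (Fin (n + 1))) // x ∉ projSubset 𝕜 Vᗮ}),
      (∀ x, H (x, 0) = x) ∧
      (∀ x, (H (x, 1)).1 ∈ projSubset 𝕜 V) ∧
      (∀ x t, x.1 ∈ projSubset 𝕜 V → H (x, t) = x) ∧
      ∀ (w : EuclideanSpace 𝕜 (Fin (n + 1))) (hw : w ≠ 0)
        (hmem : Quotient.mk (projSetoid 𝕜 _) ⟨w, hw⟩ ∉ projSubset 𝕜 Vᗮ) (t : I),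
        ∃ hz : (1 - (t : ℝ)) • w +
            (t : ℝ) • (V.orthogonalProjectionOnto w : EuclideanSpace 𝕜 (Fin (n + 1))) ≠ 0,
          (H (⟨Quotient.mk (projSetoid 𝕜 _) ⟨w, hw⟩, hmem⟩, t)).1 =
            Quotient.mk (projSetoid 𝕜 _)
              ⟨(1 - (t : ℝ)) • w +
                (t : ℝ) • (V.orthogonalProjectionOnto w : EuclideanSpace 𝕜 (Fin (n + 1))), hz⟩ :=
  stmt_2_general V
end

section
/- For unit vectors y, u ∈ F^{n+1}, the geodesic distance from [y] to the projective hyperplane P(u^⊥) equals π/2 − arccos(|⟨y,u⟩|); equivalently d_g([y], [y − ⟨y,u⟩u]) = π/2 − arccos(|⟨y,u⟩|) whenever y is not a multiple of u. -/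
open scoped InnerProductSpace

/-- For unit vectors `y, u ∈ F^{n+1}` with `y` not a multiple of `u`, the geodesic
distance from `[y]` to its orthogonal projection `[y - ⟨y,u⟩u]` onto the projective
hyperplane `P(u^⊥)` equals `π/2 - arccos |⟨y,u⟩|`, where
`d_g([x],[y]) = arccos (|⟨x,y⟩| / (‖x‖‖y‖))`. -/
theorem stmt_4 {𝕜 : Type} [RCLike 𝕜] {n : ℕ}
    (dg : EuclideanSpace 𝕜 (Fin (n + 1)) → EuclideanSpace 𝕜 (Fin (n + 1)) → ℝ)
    (hdg : ∀ x y, dg x y = Real.arccos (‖⟪x, y⟫_𝕜‖ / (‖x‖ * ‖y‖)))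
    (y u : EuclideanSpace 𝕜 (Fin (n + 1))) (hy : ‖y‖ = 1) (hu : ‖u‖ = 1)
    (hne : ∀ a : 𝕜, y ≠ a • u) :
    dg y (y - ⟪u, y⟫_𝕜 • u) = Real.pi / 2 - Real.arccos ‖⟪u, y⟫_𝕜‖ := by
  set c : 𝕜 := ⟪u, y⟫_𝕜 with hc
  set t : ℝ := ‖c‖ with htdef
  have ht0 : 0 ≤ t := norm_nonneg _
  have ht1 : t ≤ 1 := by
    have := norm_inner_le_norm (𝕜 := 𝕜) u y
    simpa [hu, hy] using this
  have hyu : ⟪y, u⟫_𝕜 = starRingEnd 𝕜 c := by rw [hc, inner_conj_symm]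
  have hinner : ⟪y, y - c • u⟫_𝕜 = ((1 - t ^ 2 : ℝ) : 𝕜) := by
    rw [inner_sub_right, inner_smul_right, hyu,
      inner_self_eq_norm_sq_to_K, RCLike.mul_conj, hy]
    push_cast
    ring
  have hnormsq : ‖y - c • u‖ ^ 2 = 1 - t ^ 2 := by
    rw [@norm_sub_sq 𝕜, inner_smul_right, hyu,
      RCLike.mul_conj, norm_smul, hy, hu]
    simp only [← RCLike.ofReal_pow, RCLike.ofReal_re, mul_one, one_pow]
    ring
  have hne0 : y - c • u ≠ 0 := sub_ne_zero.mpr (hne c)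
  have hnpos : 0 < ‖y - c • u‖ := norm_pos_iff.mpr hne0
  have hs : ‖y - c • u‖ = Real.sqrt (1 - t ^ 2) := by
    rw [← hnormsq, Real.sqrt_sq hnpos.le]
  rw [hdg, hinner, hy]
  have h1t : (0:ℝ) < 1 - t ^ 2 := by
    have := hnormsq ▸ (pow_pos hnpos 2)
    linarith
  have hnorm1t : ‖((1 - t ^ 2 : ℝ) : 𝕜)‖ = 1 - t ^ 2 := by
    rw [RCLike.norm_ofReal, abs_of_pos h1t]
  rw [hnorm1t, hs, one_mul]
  have : (1 - t ^ 2) / Real.sqrt (1 - t ^ 2) = Real.sqrt (1 - t ^ 2) := by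
    rw [Real.div_sqrt]
  rw [this, Real.arccos_eq_arcsin ht0, Real.arccos_eq_pi_div_two_sub_arcsin]
end
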